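/- arXiv:1210.4959 — 2 statements merged into one kernel-verified Lean document; each statement's English description precedes it below -/
import Mathlib

section
/- If P ∈ S is a vertex of the convex hull of S (i.e., P does not belong to the convex hull of S \ {P}), then there is exactly one point Q ∈ S such that the line through P and Q is a halving line of S. -/
/-!
A linear form `f` separates the hull vertex `P` from the other points, which therefore all lie in
the open half-plane `f > f P`. Their directions from `P` are then totally ordered by the slope
`k X = det2 (A - P) (X - P) / f (X - P)` for a fixed `A`, and `X` lies to the left of the line
`PQ` exactly when `k Q < k X`. So `PQ` is a halving line precisely when `Q` is the median of the
`n - 1` other points for `k`; general position makes `k` injective, and the median of an odd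
number of distinct values exists and is unique.
-/

/-- Planar cross product (signed area determinant) of two vectors in `ℝ × ℝ`. -/
def det2 (u v : ℝ × ℝ) : ℝ := u.1 * v.2 - u.2 * v.1

/-- Dot product of two vectors in `ℝ × ℝ`. -/
def dot2 (u v : ℝ × ℝ) : ℝ := u.1 * v.1 + u.2 * v.2

/-- A finite set of points of the plane is in general position if no three
distinct points of it are collinear. -/
def GenPos (S : Finset (ℝ × ℝ)) : Prop :=
  ∀ P ∈ S, ∀ Q ∈ S, ∀ R ∈ S, P ≠ Q → P ≠ R → Q ≠ R →
    ¬ Collinear ℝ ({P, Q, R} : Set (ℝ × ℝ))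

/-- The line through the two distinct points `P, Q ∈ S` is a halving line of `S`:
each of the two open half-planes it determines contains exactly
`(S.card - 2) / 2` points of `S`. -/
def IsHalving (S : Finset (ℝ × ℝ)) (P Q : ℝ × ℝ) : Prop :=
  P ∈ S ∧ Q ∈ S ∧ P ≠ Q ∧
  {X ∈ (S : Set (ℝ × ℝ)) | 0 < det2 (Q - P) (X - P)}.ncard = (S.card - 2) / 2 ∧
  {X ∈ (S : Set (ℝ × ℝ)) | det2 (Q - P) (X - P) < 0}.ncard = (S.card - 2) / 2

/-- Degree of a point in the underlying graph of `S`: the number of points `Q`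
such that the line `PQ` is a halving line of `S`. -/
noncomputable def hdeg (S : Finset (ℝ × ℝ)) (P : ℝ × ℝ) : ℕ :=
  {Q : ℝ × ℝ | IsHalving S P Q}.ncard

/-- The number of halving lines of `S`, counted as unordered pairs of points. -/
noncomputable def numHalvingLines (S : Finset (ℝ × ℝ)) : ℕ :=
  {e : Finset (ℝ × ℝ) | ∃ P Q : ℝ × ℝ, e = {P, Q} ∧ IsHalving S P Q}.ncard

/-- The underlying graph of `S`: vertices are the points of `S`, and two points
are adjacent exactly when the line through them is a halving line of `S`. -/
def underlyingGraph (S : Finset (ℝ × ℝ)) : SimpleGraph {x : ℝ × ℝ // x ∈ S} where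
  Adj P Q := IsHalving S P.1 Q.1 ∧ IsHalving S Q.1 P.1
  symm := ⟨fun _ _ h => ⟨h.2, h.1⟩⟩
  loopless := ⟨fun _ h => h.1.2.2.1 rfl⟩
open Finset

section Median

variable {α β : Type*} [LinearOrder β] {T : Finset α} {k : α → β}

lemma card_filter_lt_add_card_filter_gt [DecidableEq α] (hk : Set.InjOn k T) {Q : α}
    (hQ : Q ∈ T) :
    #{X ∈ T | k X < k Q} + #{X ∈ T | k Q < k X} + 1 = #T := by
  have hle : {X ∈ T | ¬ k X < k Q} = insert Q {X ∈ T | k Q < k X} := by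
    ext X
    simp only [mem_filter, mem_insert, not_lt]
    constructor
    · rintro ⟨hX, hle⟩
      rcases hle.lt_or_eq with hlt | heq
      · exact .inr ⟨hX, hlt⟩
      · exact .inl (hk hX hQ heq.symm)
    · rintro (rfl | ⟨hX, hlt⟩)
      exacts [⟨hQ, le_rfl⟩, ⟨hX, hlt.le⟩]
  rw [← card_filter_add_card_filter_not (s := T) (fun X => k X < k Q), hle,
    card_insert_of_notMem (by simp)]
  omega

lemma card_filter_gt_lt_of_lt {Q R : α} (hR : R ∈ T) (hQR : k Q < k R) :
    #{X ∈ T | k R < k X} < #{X ∈ T | k Q < k X} :=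
  card_lt_card <| (ssubset_iff_of_subset fun X hX => by
      simp only [mem_filter] at hX ⊢; exact ⟨hX.1, hQR.trans hX.2⟩).2
    ⟨R, by simp [hR, hQR], by simp⟩

lemma injOn_card_filter_gt (hk : Set.InjOn k T) :
    Set.InjOn (fun Q => #{X ∈ T | k Q < k X}) T := by
  intro Q hQ R hR h
  by_contra hne
  rcases Ne.lt_or_gt (fun h' => hne (hk hQ hR h')) with hlt | hlt
  · exact (card_filter_gt_lt_of_lt hR hlt).ne' h
  · exact (card_filter_gt_lt_of_lt hQ hlt).ne h

lemma exists_card_filter_gt_eq (hk : Set.InjOn k T) {m : ℕ} (hm : m < #T) :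
    ∃ Q ∈ T, #{X ∈ T | k Q < k X} = m := by
  have hmaps : Set.MapsTo (fun Q => #{X ∈ T | k Q < k X}) T (range #T) := fun Q hQ =>
    mem_range.2 <| card_lt_card <| filter_ssubset.2 ⟨Q, hQ, lt_irrefl _⟩
  exact surjOn_of_injOn_of_card_le _ hmaps (injOn_card_filter_gt hk) (card_range _).le
    (mem_range.2 hm)

lemma existsUnique_median [DecidableEq α] (hk : Set.InjOn k T) {m : ℕ} (hT : #T = 2 * m + 1) :
    ∃! Q, Q ∈ T ∧ #{X ∈ T | k Q < k X} = m ∧ #{X ∈ T | k X < k Q} = m := by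
  obtain ⟨Q, hQ, hQm⟩ := exists_card_filter_gt_eq hk (m := m) (by omega)
  refine ⟨Q, ⟨hQ, hQm, ?_⟩, fun R ⟨hR, hRm, _⟩ =>
    injOn_card_filter_gt hk hR hQ (hRm.trans hQm.symm)⟩
  have := card_filter_lt_add_card_filter_gt hk hQ
  omega

end Median

lemma det2_swap (u v : ℝ × ℝ) : det2 v u = -det2 u v := by
  simp only [det2]; ring

/-- The linear dependence `det2 u v • a = det2 a v • u - det2 a u • v` of three plane vectors,
evaluated under a linear form. -/
lemma map_mul_det2 {F : Type*} [FunLike F (ℝ × ℝ) ℝ] [LinearMapClass F ℝ (ℝ × ℝ) ℝ] (f : F)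
    (a u v : ℝ × ℝ) : f a * det2 u v = f u * det2 a v - f v * det2 a u := by
  have h : det2 u v • a = det2 a v • u - det2 a u • v := by
    ext <;> simp only [det2, Prod.smul_fst, Prod.smul_snd, Prod.fst_sub, Prod.snd_sub,
      smul_eq_mul] <;> ring
  simpa only [map_smul, map_sub, smul_eq_mul, mul_comm] using congrArg f h

lemma det2_eq_mul_sub_div {F : Type*} [FunLike F (ℝ × ℝ) ℝ] [LinearMapClass F ℝ (ℝ × ℝ) ℝ]
    (f : F) {a u v : ℝ × ℝ} (ha : f a ≠ 0) (hu : f u ≠ 0) (hv : f v ≠ 0) :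
    det2 u v = f u * f v / f a * (det2 a v / f v - det2 a u / f u) := by
  rw [eq_comm, div_mul_eq_mul_div, div_eq_iff ha, mul_comm _ (f a), map_mul_det2 f a u v]
  field_simp

lemma collinear_of_det2_sub_eq_zero {P Q X : ℝ × ℝ} (h : det2 (Q - P) (X - P) = 0) :
    Collinear ℝ ({P, Q, X} : Set (ℝ × ℝ)) := by
  set u := Q - P with hu
  set v := X - P with hv
  have h' : u.1 * v.2 - u.2 * v.1 = 0 := h
  have key : dot2 u u • v = dot2 u v • u := by
    ext <;> simp only [dot2, Prod.smul_fst, Prod.smul_snd, smul_eq_mul]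
    · linear_combination (-u.2) * h'
    · linear_combination u.1 * h'
  by_cases hu0 : dot2 u u = 0
  · have hQP : Q = P := by
      obtain ⟨h1, h2⟩ := mul_self_add_mul_self_eq_zero.1 hu0
      rw [← sub_eq_zero]
      exact Prod.ext h1 h2
    subst hQP
    simpa using collinear_pair ℝ Q X
  · have hX : X ∈ line[ℝ, P, Q] := by
      convert AffineMap.lineMap_mem_affineSpan_pair (dot2 u v / dot2 u u) P Q
      rw [AffineMap.lineMap_apply, vsub_eq_sub, vadd_eq_add, div_eq_inv_mul, mul_smul, ← hu,
        ← key, inv_smul_smul₀ hu0, hv, sub_add_cancel]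
    rw [Set.pair_comm Q X, Set.insert_comm P X]
    exact collinear_insert_of_mem_affineSpan_pair hX

lemma exists_strongDual_lt_of_notMem_convexHull {E : Type*} [AddCommGroup E] [Module ℝ E]
    [TopologicalSpace E] [T2Space E] [IsTopologicalAddGroup E] [ContinuousSMul ℝ E]
    [LocallyConvexSpace ℝ E] {s : Finset E} {x : E} (hx : x ∉ convexHull ℝ (s : Set E)) :
    ∃ f : StrongDual ℝ E, ∀ y ∈ s, f x < f y := by
  obtain ⟨f, c, hxc, hc⟩ := geometric_hahn_banach_point_closed (convex_convexHull ℝ _)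
    (s.finite_toSet.isCompact_convexHull ℝ).isClosed hx
  exact ⟨f, fun y hy => hxc.trans (hc y (subset_convexHull ℝ _ hy))⟩

lemma isHalving_iff_median {S : Finset (ℝ × ℝ)} {P : ℝ × ℝ} (hP : P ∈ S) {k : ℝ × ℝ → ℝ}
    (hk : ∀ Q ∈ S.erase P, ∀ X ∈ S.erase P, 0 < det2 (Q - P) (X - P) ↔ k Q < k X)
    (Q : ℝ × ℝ) :
    IsHalving S P Q ↔ Q ∈ S.erase P ∧ #{X ∈ S.erase P | k Q < k X} = (#S - 2) / 2 ∧
      #{X ∈ S.erase P | k X < k Q} = (#S - 2) / 2 := by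
  classical
  have hoff : ∀ p : ℝ × ℝ → Prop, ¬ p P →
      {X ∈ (S : Set (ℝ × ℝ)) | p X} = ↑{X ∈ S.erase P | p X} := by
    intro p hp
    ext X
    simp only [Set.mem_ofPred_eq, coe_filter, mem_coe, mem_erase]
    exact ⟨fun h => ⟨⟨fun hXP => hp (hXP ▸ h.2), h.1⟩, h.2⟩, fun h => ⟨h.1.2, h.2⟩⟩
  by_cases hQ : Q ∈ S.erase P
  · have hpos : {X ∈ (S : Set (ℝ × ℝ)) | 0 < det2 (Q - P) (X - P)} =
        ↑{X ∈ S.erase P | k Q < k X} := by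
      rw [hoff _ (by simp [det2])]
      exact congrArg _ (filter_congr fun X hX => hk Q hQ X hX)
    have hneg : {X ∈ (S : Set (ℝ × ℝ)) | det2 (Q - P) (X - P) < 0} =
        ↑{X ∈ S.erase P | k X < k Q} := by
      rw [hoff _ (by simp [det2])]
      refine congrArg _ (filter_congr fun X hX => ?_)
      rw [← hk X hX Q hQ, det2_swap, neg_lt_zero]
    rw [IsHalving, hpos, hneg, Set.ncard_coe_finset, Set.ncard_coe_finset]
    simp [hP, hQ, (ne_of_mem_erase hQ).symm, mem_of_mem_erase hQ]
  · simp only [IsHalving, hQ, false_and, iff_false]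
    exact fun ⟨_, hQS, hPQ, _⟩ => hQ (mem_erase.2 ⟨hPQ.symm, hQS⟩)

theorem stmt_1_general (S : Finset (ℝ × ℝ)) (heven : Even S.card)
    (hgp : GenPos S) (P : ℝ × ℝ) (hP : P ∈ S)
    (hhull : P ∉ convexHull ℝ (↑(S.erase P) : Set (ℝ × ℝ))) :
    ∃! Q : ℝ × ℝ, IsHalving S P Q := by
  classical
  have hcard : #(S.erase P) = #S - 1 := card_erase_of_mem hP
  have hS : 0 < #S := card_pos.2 ⟨P, hP⟩
  obtain ⟨r, hr⟩ := heven
  obtain ⟨f, hf⟩ := exists_strongDual_lt_of_notMem_convexHull hhull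
  have hfpos : ∀ X ∈ S.erase P, 0 < f (X - P) := fun X hX => by
    rw [map_sub, sub_pos]; exact hf X hX
  obtain ⟨A, hA⟩ : (S.erase P).Nonempty := by rw [← card_pos]; omega
  set k : ℝ × ℝ → ℝ := fun X => det2 (A - P) (X - P) / f (X - P)
  have hdet : ∀ Q ∈ S.erase P, ∀ X ∈ S.erase P,
      det2 (Q - P) (X - P) = f (Q - P) * f (X - P) / f (A - P) * (k X - k Q) :=
    fun Q hQ X hX => det2_eq_mul_sub_div f (hfpos A hA).ne' (hfpos Q hQ).ne' (hfpos X hX).ne'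
  have hk : ∀ Q ∈ S.erase P, ∀ X ∈ S.erase P, 0 < det2 (Q - P) (X - P) ↔ k Q < k X :=
    fun Q hQ X hX => by
      rw [hdet Q hQ X hX, mul_pos_iff_of_pos_left
        (div_pos (mul_pos (hfpos Q hQ) (hfpos X hX)) (hfpos A hA)), sub_pos]
  have hkinj : Set.InjOn k (S.erase P) := fun Q hQ X hX hQX => by
    by_contra hne
    refine hgp P hP Q (mem_of_mem_erase hQ) X (mem_of_mem_erase hX) (ne_of_mem_erase hQ).symm
      (ne_of_mem_erase hX).symm hne (collinear_of_det2_sub_eq_zero ?_)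
    rw [hdet Q hQ X hX, hQX, sub_self, mul_zero]
  exact (existsUnique_congr (isHalving_iff_median hP hk)).2
    (existsUnique_median hkinj (by omega))

/-- a vertex of the convex hull of `S` lies on exactly one
halving line of `S`. -/
theorem stmt_1 (S : Finset (ℝ × ℝ)) (heven : Even S.card) (h4 : 4 ≤ S.card)
    (hgp : GenPos S) (P : ℝ × ℝ) (hP : P ∈ S)
    (hhull : P ∉ convexHull ℝ (↑(S.erase P) : Set (ℝ × ℝ))) :
    ∃! Q : ℝ × ℝ, IsHalving S P Q :=
  stmt_1_general S heven hgp P hP hhull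
end

section
/- If some point V ∈ S has degree n−1 in the underlying graph of S (i.e., VQ is a halving line for every Q ∈ S with Q ≠ V), then the underlying graph of S is the star K_{1,n−1}: every point of S other than V has degree exactly 1, its unique neighbor being V. -/
/-!
Let `k = (n - 2) / 2`. If every line `VP` is halving, then no open half-plane bounded by a line
through `V` contains `k + 2` points of `S`: rotate the boundary line about `V` until it first
meets a point `P` of the half-plane; the remaining `≥ k + 1` points then lie on one side of the
halving line `VP`. Now let `QR` be a halving line avoiding `V`, with `V` on its positive side.
The parallel to `QR` through `V` bounds an open half-plane containing `Q`, `R` and the `k` points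
on the negative side of `QR`, which is impossible.
-/

lemma dot2_self_pos {u : ℝ × ℝ} (h : u ≠ 0) : 0 < dot2 u u := by
  have h' : u.1 ≠ 0 ∨ u.2 ≠ 0 := by
    by_contra! hc
    exact h (Prod.ext hc.1 hc.2)
  simp only [dot2]
  rcases h' with h1 | h1 <;> nlinarith [mul_self_nonneg u.1, mul_self_nonneg u.2, mul_self_pos.2 h1]

lemma det2_sub_swap (P Q X : ℝ × ℝ) : det2 (P - Q) (X - Q) = -det2 (Q - P) (X - P) := by
  simp only [det2, Prod.fst_sub, Prod.snd_sub]
  ring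

lemma collinear_of_det2_eq_zero {P Q R : ℝ × ℝ} (hPQ : P ≠ Q)
    (h : det2 (Q - P) (R - P) = 0) : Collinear ℝ ({P, Q, R} : Set (ℝ × ℝ)) := by
  have hd : dot2 (Q - P) (Q - P) ≠ 0 := (dot2_self_pos (sub_ne_zero.2 hPQ.symm)).ne'
  refine (collinear_iff_of_mem (Set.mem_insert P _)).2 ⟨Q - P, ?_⟩
  rintro X (rfl | rfl | rfl)
  · exact ⟨0, by simp⟩
  · exact ⟨1, by simp⟩
  · refine ⟨dot2 (Q - P) (X - P) / dot2 (Q - P) (Q - P), ?_⟩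
    simp only [det2, dot2, Prod.fst_sub, Prod.snd_sub] at h hd
    refine Prod.ext ?_ ?_ <;>
      simp only [vadd_eq_add, Prod.fst_add, Prod.snd_add, Prod.smul_fst, Prod.smul_snd,
        smul_eq_mul, dot2, Prod.fst_sub, Prod.snd_sub] <;>
      rw [div_mul_eq_mul_div, div_add' _ _ _ hd, eq_div_iff hd]
    · linear_combination (-(Q.2 - P.2)) * h
    · linear_combination (Q.1 - P.1) * h

lemma GenPos.det2_ne_zero {S : Finset (ℝ × ℝ)} (hgp : GenPos S) {P Q R : ℝ × ℝ}
    (hP : P ∈ S) (hQ : Q ∈ S) (hR : R ∈ S) (hPQ : P ≠ Q) (hPR : P ≠ R) (hQR : Q ≠ R) :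
    det2 (Q - P) (R - P) ≠ 0 :=
  fun h => hgp P hP Q hQ R hR hPQ hPR hQR (collinear_of_det2_eq_zero hPQ h)

/-- `dot2 e p / det2 e p` is the cotangent of the angle from `e` to `p`; on the negative side of
`e` it is largest for the vector closest in angle to `-e`. -/
lemma det2_nonneg_of_cot_le {e p x : ℝ × ℝ} (he : e ≠ 0) (hp : det2 e p < 0)
    (hx : det2 e x < 0) (hcot : dot2 e x / det2 e x ≤ dot2 e p / det2 e p) :
    0 ≤ det2 p x := by
  have hid : det2 p x * dot2 e e =
      det2 e p * det2 e x * (dot2 e p / det2 e p - dot2 e x / det2 e x) := by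
    have := hp.ne
    have := hx.ne
    field_simp
    simp only [det2, dot2]
    ring
  have hrhs : 0 ≤ det2 e p * det2 e x * (dot2 e p / det2 e p - dot2 e x / det2 e x) :=
    mul_nonneg (mul_pos_of_neg_of_neg hp hx).le (sub_nonneg.2 hcot)
  exact nonneg_of_mul_nonneg_left (hid ▸ hrhs) (dot2_self_pos he)

namespace IsHalving

variable {S : Finset (ℝ × ℝ)} {P Q : ℝ × ℝ}

lemma symm (h : IsHalving S P Q) : IsHalving S Q P := by
  obtain ⟨hP, hQ, hne, hpos, hneg⟩ := h
  refine ⟨hQ, hP, hne.symm, ?_, ?_⟩ <;> simpa only [det2_sub_swap P Q, neg_pos, neg_lt_zero]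

lemma card_filter_pos (h : IsHalving S P Q) :
    {X ∈ S | 0 < det2 (Q - P) (X - P)}.card = (S.card - 2) / 2 := by
  simpa [← Set.ncard_coe_finset] using h.2.2.2.1

lemma card_filter_neg (h : IsHalving S P Q) :
    {X ∈ S | det2 (Q - P) (X - P) < 0}.card = (S.card - 2) / 2 := by
  simpa [← Set.ncard_coe_finset] using h.2.2.2.2

end IsHalving

section Star

variable {S : Finset (ℝ × ℝ)} {V : ℝ × ℝ}

lemma card_halfPlane_le_of_star (hgp : GenPos S) (hV : V ∈ S)
    (hstar : ∀ Q ∈ S, Q ≠ V → IsHalving S V Q) {e : ℝ × ℝ} (he : e ≠ 0) :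
    {X ∈ S | det2 e (X - V) < 0}.card ≤ (S.card - 2) / 2 + 1 := by
  set T := {X ∈ S | det2 e (X - V) < 0}
  by_contra! hT
  obtain ⟨P, hPT, hmax⟩ :=
    T.exists_max_image (fun X => dot2 e (X - V) / det2 e (X - V)) (Finset.card_pos.1 (by omega))
  obtain ⟨hPS, hPneg⟩ := Finset.mem_filter.1 hPT
  have ne_V : ∀ {X}, det2 e (X - V) < 0 → X ≠ V := by
    rintro X hX rfl
    simp [det2] at hX
  have hsub : T.erase P ⊆ {X ∈ S | 0 < det2 (P - V) (X - V)} := by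
    intro X hX
    obtain ⟨hXP, hXT⟩ := Finset.mem_erase.1 hX
    obtain ⟨hXS, hXneg⟩ := Finset.mem_filter.1 hXT
    refine Finset.mem_filter.2 ⟨hXS, lt_of_le_of_ne ?_ ?_⟩
    · exact det2_nonneg_of_cot_le he hPneg hXneg (hmax X hXT)
    · exact (hgp.det2_ne_zero hV hPS hXS (ne_V hPneg).symm (ne_V hXneg).symm hXP.symm).symm
  have := Finset.card_le_card hsub
  rw [Finset.card_erase_of_mem hPT, (hstar P hPS (ne_V hPneg)).card_filter_pos] at this
  omega

lemma not_isHalving_of_star (hgp : GenPos S) (hV : V ∈ S)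
    (hstar : ∀ Q ∈ S, Q ≠ V → IsHalving S V Q) {Q R : ℝ × ℝ}
    (hVpos : 0 < det2 (R - Q) (V - Q)) : ¬ IsHalving S Q R := by
  intro h
  obtain ⟨hQS, hRS, hQR, -, -⟩ := id h
  set e := R - Q
  set T := {X ∈ S | det2 e (X - V) < 0}
  set F := {X ∈ S | det2 e (X - Q) < 0}
  have heQ : det2 e (Q - Q) = 0 := by simp [det2]
  have heR : det2 e (R - Q) = 0 := by
    simp only [det2]
    ring
  have mem_T : ∀ X ∈ S, det2 e (X - Q) ≤ 0 → X ∈ T := by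
    intro X hX hle
    have shift : det2 e (X - V) = det2 e (X - Q) - det2 e (V - Q) := by
      simp only [det2, Prod.fst_sub, Prod.snd_sub]
      ring
    exact Finset.mem_filter.2 ⟨hX, by linarith⟩
  have hsub : insert Q (insert R F) ⊆ T := by
    simp only [Finset.insert_subset_iff]
    exact ⟨mem_T Q hQS heQ.le, mem_T R hRS heR.le,
      fun X hX => mem_T X (Finset.mem_filter.1 hX).1 (Finset.mem_filter.1 hX).2.le⟩
  have hQF : Q ∉ F := fun hQ => (Finset.mem_filter.1 hQ).2.ne heQ
  have hRF : R ∉ F := fun hR => (Finset.mem_filter.1 hR).2.ne heR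
  have hcard : (insert Q (insert R F)).card = F.card + 2 := by
    rw [Finset.card_insert_of_notMem (by simp [hQR, hQF]), Finset.card_insert_of_notMem hRF]
  have hlower : F.card + 2 ≤ T.card := hcard ▸ Finset.card_le_card hsub
  have hupper : T.card ≤ (S.card - 2) / 2 + 1 :=
    card_halfPlane_le_of_star hgp hV hstar (sub_ne_zero.2 hQR.symm)
  have hF : F.card = (S.card - 2) / 2 := h.card_filter_neg
  omega

end Star

theorem stmt_8_general (S : Finset (ℝ × ℝ))
    (hgp : GenPos S) (V : ℝ × ℝ) (hV : V ∈ S)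
    (hstar : ∀ Q ∈ S, Q ≠ V → IsHalving S V Q) :
    ∀ Q ∈ S, Q ≠ V → {R : ℝ × ℝ | IsHalving S Q R} = {V} := by
  intro Q hQ hQV
  ext R
  refine ⟨fun h => ?_, fun hR => hR ▸ (hstar Q hQ hQV).symm⟩
  by_contra hRV
  have hside := hgp.det2_ne_zero hQ h.2.1 hV h.2.2.1 hQV hRV
  rcases hside.lt_or_gt with hneg | hpos
  · refine not_isHalving_of_star hgp hV hstar ?_ h.symm
    rwa [det2_sub_swap, neg_pos]
  · exact not_isHalving_of_star hgp hV hstar hpos h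

/-- if some point `V` of `S` has degree `n - 1` in the underlying
graph (it is joined by halving lines to all other points), then the underlying
graph is the star `K_{1,n-1}`: every other point has `V` as its unique neighbor. -/
theorem stmt_8 (S : Finset (ℝ × ℝ)) (heven : Even S.card) (h4 : 4 ≤ S.card)
    (hgp : GenPos S) (V : ℝ × ℝ) (hV : V ∈ S)
    (hstar : ∀ Q ∈ S, Q ≠ V → IsHalving S V Q) :
    ∀ Q ∈ S, Q ≠ V → {R : ℝ × ℝ | IsHalving S Q R} = {V} :=
  stmt_8_general S hgp V hV hstar
end
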